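/- arXiv:math/0508458 — 4 statements merged into one kernel-verified Lean document; each statement's English description precedes it below -/
import Mathlib

section
/- Let d ≥ 2 and let B1 = [[b11, b12·d],[b12·d, b22·d]] and B2 = [[c11, c12·d],[c12·d, c22·d]] be primitive symmetric integer matrices. If B2 = Tᵗ·B1·T for some T = [[t11,t12],[t21,t22]] ∈ GL₂(ℤ), then t12 ≡ 0 (mod d). -/
/-!
Modulo `d`, `Tᵀ B₁ T ≡ b11 · vᵀ v` where `v = (t11, t12)` is the first row of `T`, so the entries
`(1,2)` and `(2,2)` of `B₂` give `d ∣ b11 t11 t12` and `d ∣ b11 t12²`. Primitivity of `B₁` makes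
`b11` coprime to `d`, and since `det T = ±1` makes `t11, t12` coprime, `t12` is a linear combination
of `t11 t12` and `t12²`.
-/

open Matrix

theorem Matrix.dvd_transpose_mul_mul_apply_sub {R : Type*} [CommRing R] (d p q r : R)
    (T : Matrix (Fin 2) (Fin 2) R) (i j : Fin 2) :
    d ∣ (Tᵀ * !![p, q * d; q * d, r * d] * T) i j - p * (T 0 i * T 0 j) := by
  simp only [mul_apply, Fin.sum_univ_two, transpose_apply, of_apply, cons_val', cons_val_zero,
    cons_val_one, empty_val', cons_val_fin_one]
  exact ⟨q * (T 0 i * T 1 j + T 1 i * T 0 j) + r * (T 1 i * T 1 j), by ring⟩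

theorem Matrix.isCoprime_apply_zero_zero_apply_zero_one {R : Type*} [CommRing R]
    {T : Matrix (Fin 2) (Fin 2) R} (hT : IsUnit T.det) : IsCoprime (T 0 0) (T 0 1) := by
  obtain ⟨u, hu⟩ := hT.exists_left_inv
  rw [det_fin_two] at hu
  exact ⟨u * T 1 1, -(u * T 1 0), by linear_combination hu⟩

theorem IsCoprime.dvd_of_dvd_mul_of_dvd_mul_self {R : Type*} [CommRing R] {a b d : R}
    (h : IsCoprime a b) (hab : d ∣ a * b) (hbb : d ∣ b * b) : d ∣ b := by
  obtain ⟨u, v, huv⟩ := h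
  have hb : b = u * (a * b) + v * (b * b) := by linear_combination -b * huv
  rw [hb]
  exact dvd_add (hab.mul_left u) (hbb.mul_left v)

theorem Int.isCoprime_of_gcd_gcd_mul_eq_one {x y z d : ℤ}
    (h : Int.gcd x (Int.gcd (y * d) (z * d)) = 1) : IsCoprime d x := by
  have hd : d ∣ (Int.gcd (y * d) (z * d) : ℤ) :=
    Int.dvd_coe_gcd (dvd_mul_left d y) (dvd_mul_left d z)
  exact (Int.isCoprime_iff_gcd_eq_one.mpr h).of_isCoprime_of_dvd_right hd |>.symm

theorem stmt2_general (d b11 b12 b22 c11 c12 c22 : ℤ)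
    (hB1prim : Int.gcd b11 (Int.gcd (b12 * d) (b22 * d)) = 1)
    (T : Matrix (Fin 2) (Fin 2) ℤ)
    (hT : T.det = 1 ∨ T.det = -1)
    (hconj : !![c11, c12 * d; c12 * d, c22 * d] =
      Tᵀ * !![b11, b12 * d; b12 * d, b22 * d] * T) :
    d ∣ T 0 1 := by
  have hdvd (i j : Fin 2) (hij : d ∣ !![c11, c12 * d; c12 * d, c22 * d] i j) :
      d ∣ T 0 i * T 0 j := by
    have h := dvd_transpose_mul_mul_apply_sub d b11 b12 b22 T i j
    rw [← hconj] at h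
    exact (Int.isCoprime_of_gcd_gcd_mul_eq_one hB1prim).dvd_of_dvd_mul_left
      ((dvd_sub_right hij).mp h)
  have hrow := isCoprime_apply_zero_zero_apply_zero_one (Int.isUnit_iff.mpr hT)
  exact hrow.dvd_of_dvd_mul_of_dvd_mul_self (hdvd 0 1 (by simp)) (hdvd 1 1 (by simp))

/-- Let `d ≥ 2` and let `B1 = [[b11,b12·d],[b12·d,b22·d]]` and
`B2 = [[c11,c12·d],[c12·d,c22·d]]` be primitive symmetric integer matrices.
If `B2 = Tᵗ·B1·T` for some `T ∈ GL₂(ℤ)`, then `d ∣ t12`. -/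
theorem stmt2 (d b11 b12 b22 c11 c12 c22 : ℤ) (hd : 2 ≤ d)
    (hB1prim : Int.gcd b11 (Int.gcd (b12 * d) (b22 * d)) = 1)
    (hB2prim : Int.gcd c11 (Int.gcd (c12 * d) (c22 * d)) = 1)
    (T : Matrix (Fin 2) (Fin 2) ℤ)
    (hT : T.det = 1 ∨ T.det = -1)
    (hconj : !![c11, c12 * d; c12 * d, c22 * d] =
      Tᵀ * !![b11, b12 * d; b12 * d, b22 * d] * T) :
    d ∣ T 0 1 :=
  stmt2_general d b11 b12 b22 c11 c12 c22 hB1prim T hT hconj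
end

section
/- Let Z = diag(z_1,…,z_n) with Im z_k > 0, Π = (I_n Z), and suppose A, A' ∈ M_n(ℂ) and R, R' ∈ M_{2n}(ℤ) satisfy A·Π = Π·R, A'·Π = Π·R', and R' = J⁻¹·Rᵗ·J where J = [[0, I_n],[−I_n, 0]]. Then A' = (Im Z)·Āᵗ·(Im Z)⁻¹. -/
open Matrix Complex

private theorem stmt8_scalar (α w u a b c d : ℂ)
    (ha : starRingEnd ℂ a = a) (hb : starRingEnd ℂ b = b)
    (hc : starRingEnd ℂ c = c) (hd : starRingEnd ℂ d = d)
    (h1 : α = a + u * c) (h2 : α * w = b + u * d) :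
    (d - w * c) * (u.im : ℂ) = (w.im : ℂ) * starRingEnd ℂ α := by
  have h3 : starRingEnd ℂ α = a + starRingEnd ℂ u * c := by
    have := congrArg (starRingEnd ℂ) h1; simpa [ha, hc] using this
  have h4 : starRingEnd ℂ α * starRingEnd ℂ w = b + starRingEnd ℂ u * d := by
    have := congrArg (starRingEnd ℂ) h2; simpa [hb, hd, _root_.map_mul] using this
  have h5 : u - starRingEnd ℂ u = 2 * (u.im : ℂ) * I := by
    have := Complex.sub_conj u; push_cast at this; linear_combination this
  have h6 : w - starRingEnd ℂ w = 2 * (w.im : ℂ) * I := by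
    have := Complex.sub_conj w; push_cast at this; linear_combination this
  have key : (2 * I) * ((d - w * c) * (u.im : ℂ)) =
      (2 * I) * ((w.im : ℂ) * starRingEnd ℂ α) := by
    linear_combination h4 - h2 + w * h1 - w * h3 - (d - w * c) * h5 + starRingEnd ℂ α * h6
  have h2I : (2 * I : ℂ) ≠ 0 := by simp [Complex.I_ne_zero]
  exact mul_left_cancel₀ h2I key

/-- With `Z = diag(z₁,…,zₙ)`, `Im zₖ > 0`, `Π = (Iₙ Z)`, suppose
`A·Π = Π·R`, `A'·Π = Π·R'` and `R' = J⁻¹·Rᵗ·J` with `J = [[0,Iₙ],[−Iₙ,0]]`.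
Then `A' = (Im Z)·Āᵗ·(Im Z)⁻¹`. -/
theorem stmt8 (n : ℕ) (z : Fin n → ℂ) (hz : ∀ k, 0 < (z k).im)
    (A A' : Matrix (Fin n) (Fin n) ℂ)
    (R R' : Matrix (Fin n ⊕ Fin n) (Fin n ⊕ Fin n) ℤ)
    (hA : A * Matrix.fromCols 1 (Matrix.diagonal z) =
      Matrix.fromCols 1 (Matrix.diagonal z) * R.map (Int.cast : ℤ → ℂ))
    (hA' : A' * Matrix.fromCols 1 (Matrix.diagonal z) =
      Matrix.fromCols 1 (Matrix.diagonal z) * R'.map (Int.cast : ℤ → ℂ))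
    (hR' : R' = (Matrix.fromBlocks 0 1 (-1) 0)⁻¹ * Rᵀ * Matrix.fromBlocks 0 1 (-1) 0) :
    A' = Matrix.diagonal (fun k => ((z k).im : ℂ)) * Aᴴ *
      (Matrix.diagonal fun k => ((z k).im : ℂ))⁻¹ := by
  -- the inverse of J
  have hJ : ((Matrix.fromBlocks 0 1 (-1) 0 : Matrix (Fin n ⊕ Fin n) (Fin n ⊕ Fin n) ℤ))⁻¹
      = Matrix.fromBlocks 0 (-1) 1 0 := by
    apply Matrix.inv_eq_left_inv
    simp [Matrix.fromBlocks_multiply, ← Matrix.fromBlocks_one]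
  rw [hJ] at hR'
  subst hR'
  set S : Matrix (Fin n ⊕ Fin n) (Fin n ⊕ Fin n) ℤ :=
    Matrix.fromBlocks 0 (-1) 1 0 * Rᵀ * Matrix.fromBlocks 0 1 (-1) 0 with hS
  -- entries of R'
  have hR'e : ∀ j k : Fin n,
      (S (Sum.inl j) (Sum.inl k) = R (Sum.inr k) (Sum.inr j))
      ∧ (S (Sum.inr j) (Sum.inl k) = - R (Sum.inr k) (Sum.inl j)) := by
    intro j k
    constructor <;>
      simp [hS, Matrix.mul_apply, Fintype.sum_sum_type, Matrix.fromBlocks_apply₁₁,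
        Matrix.fromBlocks_apply₁₂, Matrix.fromBlocks_apply₂₁, Matrix.fromBlocks_apply₂₂,
        Matrix.one_apply, ite_mul, mul_ite, Finset.sum_ite_eq, Finset.sum_ite_eq']
  -- main identity:  A' * D = D * Aᴴ  with D = diagonal (Im z)
  have G : A' * Matrix.diagonal (fun k => ((z k).im : ℂ)) =
      Matrix.diagonal (fun k => ((z k).im : ℂ)) * Aᴴ := by
    ext j k
    rw [Matrix.mul_diagonal, Matrix.diagonal_mul, Matrix.conjTranspose_apply]
    -- entry equations for A
    have e1 : A k j = (R (Sum.inl k) (Sum.inl j) : ℂ)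
        + z k * (R (Sum.inr k) (Sum.inl j) : ℂ) := by
      have e : (A * Matrix.fromCols 1 (Matrix.diagonal z)) k (Sum.inl j) = ∑ l,
          Matrix.fromCols 1 (Matrix.diagonal z) k l * R.map (Int.cast : ℤ → ℂ) l (Sum.inl j) :=
        congrFun (congrFun hA k) (Sum.inl j)
      simpa [Matrix.mul_apply, CStarMatrix.mul_apply, Fintype.sum_sum_type, Matrix.fromCols_apply_inl, Matrix.fromCols_apply_inr, Matrix.one_apply,
        Matrix.diagonal_apply, ite_mul, mul_ite, Finset.sum_ite_eq, Finset.sum_ite_eq'] using e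
    have e2 : A k j * z j = (R (Sum.inl k) (Sum.inr j) : ℂ)
        + z k * (R (Sum.inr k) (Sum.inr j) : ℂ) := by
      have e : (A * Matrix.fromCols 1 (Matrix.diagonal z)) k (Sum.inr j) = ∑ l,
          Matrix.fromCols 1 (Matrix.diagonal z) k l * R.map (Int.cast : ℤ → ℂ) l (Sum.inr j) :=
        congrFun (congrFun hA k) (Sum.inr j)
      simpa [Matrix.mul_apply, CStarMatrix.mul_apply, Fintype.sum_sum_type, Matrix.fromCols_apply_inl, Matrix.fromCols_apply_inr, Matrix.one_apply,
        Matrix.diagonal_apply, ite_mul, mul_ite, Finset.sum_ite_eq, Finset.sum_ite_eq'] using e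
    -- entry equation for A'
    have e1' : A' j k = (S (Sum.inl j) (Sum.inl k) : ℂ)
        + z j * (S (Sum.inr j) (Sum.inl k) : ℂ) := by
      have e : (A' * Matrix.fromCols 1 (Matrix.diagonal z)) j (Sum.inl k) = ∑ l,
          Matrix.fromCols 1 (Matrix.diagonal z) j l * S.map (Int.cast : ℤ → ℂ) l (Sum.inl k) :=
        congrFun (congrFun hA' j) (Sum.inl k)
      simpa [Matrix.mul_apply, CStarMatrix.mul_apply, Fintype.sum_sum_type, Matrix.fromCols_apply_inl, Matrix.fromCols_apply_inr, Matrix.one_apply,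
        Matrix.diagonal_apply, ite_mul, mul_ite, Finset.sum_ite_eq, Finset.sum_ite_eq'] using e
    rw [(hR'e j k).1, (hR'e j k).2] at e1'
    push_cast at e1'
    have key := stmt8_scalar (A k j) (z j) (z k)
      ((R (Sum.inl k) (Sum.inl j) : ℂ)) ((R (Sum.inl k) (Sum.inr j) : ℂ))
      ((R (Sum.inr k) (Sum.inl j) : ℂ)) ((R (Sum.inr k) (Sum.inr j) : ℂ))
      (by simp) (by simp) (by simp) (by simp) e1 e2
    rw [e1', show star (A k j) = starRingEnd ℂ (A k j) from rfl]
    linear_combination key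
  -- conclude using invertibility of the diagonal matrix
  have hdet : IsUnit (Matrix.diagonal (fun k => ((z k).im : ℂ))).det := by
    rw [Matrix.det_diagonal]
    rw [isUnit_iff_ne_zero]
    exact Finset.prod_ne_zero_iff.mpr fun k _ =>
      Complex.ofReal_ne_zero.mpr (hz k).ne'
  have : Invertible (Matrix.diagonal (fun k => ((z k).im : ℂ))) :=
    Matrix.invertibleOfIsUnitDet _ hdet
  exact ((Matrix.mul_inv_eq_iff_eq_mul_of_invertible _ _ _).mpr G.symm).symm
end

section
/- Every positive definite symmetric integer matrix A = [[a,b],[b,c]] with determinant 1 is GL₂(ℤ)-equivalent to the identity matrix, i.e. there exists T ∈ GL₂(ℤ) with Tᵗ·A·T = I₂. -/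
open Matrix

private lemma stmt13_aux : ∀ n : ℕ, ∀ a b c : ℤ, a.natAbs ≤ n → 0 < a →
    a * c - b ^ 2 = 1 →
    ∃ T : Matrix (Fin 2) (Fin 2) ℤ, (T.det = 1 ∨ T.det = -1) ∧
      Tᵀ * !![a, b; b, c] * T = 1 := by
  intro n
  induction n with
  | zero => intro a b c hle ha _; omega
  | succ n ih =>
    intro a b c hle ha hdet
    by_cases h1 : a = 1
    · subst h1
      have hc : c = 1 + b ^ 2 := by linarith
      refine ⟨!![1, -b; 0, 1], Or.inl (by simp [Matrix.det_fin_two_of]), ?_⟩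
      subst hc
      ext i j
      fin_cases i <;> fin_cases j <;>
        simp [Matrix.mul_apply, Fin.sum_univ_two, Matrix.transpose_apply,
          Matrix.one_apply, Matrix.vecHead, Matrix.vecTail] <;> try ring
    · have ha2 : 2 ≤ a := by omega
      have hmod := Int.emod_nonneg b (by omega : a ≠ 0)
      have hmod2 := Int.emod_lt_of_pos b ha
      set q : ℤ := if 2 * (b % a) ≤ a then b / a else b / a + 1 with hq
      set b' : ℤ := b - q * a with hb'
      have hbound : -a ≤ 2 * b' ∧ 2 * b' ≤ a := by
        rw [hb', hq]
        by_cases hcond : 2 * (b % a) ≤ a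
        · simp only [if_pos hcond]
          have hx : b - b / a * a = b % a := by rw [Int.emod_def]; ring
          constructor <;> linarith
        · simp only [if_neg hcond]
          have hx : b - (b / a + 1) * a = b % a - a := by rw [Int.emod_def]; ring
          constructor <;> linarith
      have hb'sq : 4 * b' ^ 2 ≤ a ^ 2 := by
        nlinarith [mul_nonneg (by linarith [hbound.2] : (0:ℤ) ≤ a - 2 * b')
          (by linarith [hbound.1] : (0:ℤ) ≤ a + 2 * b')]
      set c' : ℤ := a * q ^ 2 - 2 * b * q + c with hc'
      have hdet' : c' * a - b' ^ 2 = 1 := by rw [hc', hb']; ring_nf; linarith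
      have hc'pos : 0 < c' := by nlinarith
      have hc'lt : c' < a := by nlinarith
      obtain ⟨T₂, hT₂det, hT₂⟩ := ih c' b' a (by omega) hc'pos hdet'
      refine ⟨!![-q, 1; 1, 0] * T₂, ?_, ?_⟩
      · have : (!![-q, 1; 1, 0] : Matrix (Fin 2) (Fin 2) ℤ).det = -1 := by
          simp [Matrix.det_fin_two_of]
        rw [Matrix.det_mul, this]
        rcases hT₂det with h | h <;> rw [h] <;> [right; left] <;> ring
      · have hM : (!![-q, 1; 1, 0] : Matrix (Fin 2) (Fin 2) ℤ)ᵀ * !![a, b; b, c] *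
            !![-q, 1; 1, 0] = !![c', b'; b', a] := by
          ext i j
          fin_cases i <;> fin_cases j <;>
            simp [Matrix.mul_apply, Fin.sum_univ_two, Matrix.transpose_apply,
              Matrix.vecHead, Matrix.vecTail, hc', hb'] <;> try ring
        calc (!![-q, 1; 1, 0] * T₂)ᵀ * !![a, b; b, c] * (!![-q, 1; 1, 0] * T₂)
            = T₂ᵀ * (!![-q, 1; 1, 0]ᵀ * !![a, b; b, c] * !![-q, 1; 1, 0]) * T₂ := by
              rw [Matrix.transpose_mul]; noncomm_ring
          _ = 1 := by rw [hM, hT₂]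

/-- Every positive definite symmetric integer matrix `A = [[a,b],[b,c]]`
with determinant 1 is `GL₂(ℤ)`-equivalent to the identity matrix. -/
theorem stmt13 (a b c : ℤ) (ha : 0 < a) (hdet : a * c - b ^ 2 = 1) :
    ∃ T : Matrix (Fin 2) (Fin 2) ℤ, (T.det = 1 ∨ T.det = -1) ∧
      Tᵀ * !![a, b; b, c] * T = 1 := by
  exact stmt13_aux a.natAbs a b c le_rfl ha hdet
end

section
/- Every positive definite symmetric integer matrix of size 3×3 with determinant 1 is GL₃(ℤ)-equivalent to the identity matrix I₃. -/
/-
Among the forms `Tᵀ A T` with `det T = 1`, pick one, `B`, of least trace (the traces are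
nonnegative integers). Replacing the `k`-th column of `T` by `T v` with `v k = 1` changes the
trace by `vᵀ B v - B k k`, so each diagonal entry `B k k` is the minimum of the form of `B` on the
affine plane `v k = 1`. For a ternary form `[a b c; p q r]` the vectors with entries in `{0, ±1}`
give `2|p| ≤ a, b` (and likewise for `q`, `r`) and, when `pqr < 0`, bound `2(|p| + |q| + |r|)` by
the sum of any two diagonal entries. These imply the Minkowski-type bound `abc ≤ 4 det B = 4`, so
some diagonal entry is `1`; its row then vanishes off the diagonal, and a binary form with
`bc - r² = 1` and `4r² ≤ bc` is the identity.
-/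

open Matrix

namespace Matrix

variable {n R : Type*}

theorem isSymm_of_posDef_map {B : Matrix n n ℤ} (hB : (B.map (Int.cast : ℤ → ℝ)).PosDef) :
    B.IsSymm := by
  ext i j
  simpa using hB.isHermitian.apply i j

variable [Fintype n] [DecidableEq n] [CommRing R]

theorem det_updateCol_one (k : n) (v : n → R) : (updateCol 1 k v).det = v k := by
  simpa [mulVec, dotProduct, one_apply] using det_updateCol_sum (1 : Matrix n n R) k v

theorem trace_transpose_mul_mul_updateCol_one (B : Matrix n n R) (k : n) (v : n → R) :
    ((updateCol 1 k v)ᵀ * B * updateCol 1 k v).trace = B.trace - B k k + v ⬝ᵥ B *ᵥ v := by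
  have hdiag (l : n) : ((updateCol 1 k v)ᵀ * B * updateCol 1 k v) l l
      = if l = k then v ⬝ᵥ B *ᵥ v else B l l := by
    split_ifs with h
    · subst h
      simp only [mul_apply, transpose_apply, updateCol_self, dotProduct, mulVec, Finset.mul_sum,
        Finset.sum_mul]
      rw [Finset.sum_comm]
      exact Finset.sum_congr rfl fun _ _ => Finset.sum_congr rfl fun _ _ => by ring
    · simp [mul_apply, h, one_apply]
  simp only [trace, diag, hdiag]
  rw [← Finset.add_sum_erase _ _ (Finset.mem_univ k),
    ← Finset.add_sum_erase _ _ (Finset.mem_univ k),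
    Finset.sum_congr rfl fun l hl => if_neg (Finset.ne_of_mem_erase hl), if_pos rfl]
  ring

theorem posDef_map_transpose_mul_mul {A T : Matrix n n ℤ}
    (hA : (A.map (Int.cast : ℤ → ℝ)).PosDef) (hT : IsUnit T.det) :
    ((Tᵀ * A * T).map (Int.cast : ℤ → ℝ)).PosDef := by
  have hmap : (Tᵀ * A * T).map (Int.cast : ℤ → ℝ)
      = (T.map (Int.cast : ℤ → ℝ))ᴴ * A.map Int.cast * T.map Int.cast := by
    rw [show (Int.cast : ℤ → ℝ) = Int.castRingHom ℝ from rfl]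
    simp only [Matrix.map_mul, transpose_map, conjTranspose_eq_transpose_of_trivial]
  rw [hmap]
  refine hA.conjTranspose_mul_mul_same (mulVec_injective_of_isUnit ?_)
  rw [isUnit_iff_isUnit_det]
  exact (Int.castRingHom ℝ).map_det T ▸ hT.map _

def IsReduced (B : Matrix n n ℤ) : Prop :=
  ∀ k (v : n → ℤ), v k = 1 → B k k ≤ v ⬝ᵥ B *ᵥ v

theorem exists_isReduced_transpose_mul_mul (A : Matrix n n ℤ)
    (hA : (A.map (Int.cast : ℤ → ℝ)).PosDef) :
    ∃ T : Matrix n n ℤ, T.det = 1 ∧ IsReduced (Tᵀ * A * T) := by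
  obtain ⟨t, ⟨T, hT, rfl⟩, hmin⟩ := Int.exists_least_of_bdd
    (P := fun t => ∃ T : Matrix n n ℤ, T.det = 1 ∧ (Tᵀ * A * T).trace = t)
    ⟨0, by
      rintro _ ⟨T, hT, rfl⟩
      have := (posDef_map_transpose_mul_mul hA (T := T) (by simp [hT])).posSemidef.trace_nonneg
      simp only [trace, diag, map_apply] at this
      exact_mod_cast this⟩
    ⟨_, 1, det_one, rfl⟩
  refine ⟨T, hT, fun k v hv => ?_⟩
  have := hmin _ ⟨T * updateCol 1 k v, by rw [det_mul, hT, det_updateCol_one, hv, one_mul], rfl⟩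
  rw [transpose_mul, show (updateCol 1 k v)ᵀ * Tᵀ * A * (T * updateCol 1 k v)
    = (updateCol 1 k v)ᵀ * (Tᵀ * A * T) * updateCol 1 k v by simp only [Matrix.mul_assoc],
    trace_transpose_mul_mul_updateCol_one] at this
  linarith

end Matrix

theorem minkowski_bound_of_le (a b c u v w : ℤ) (ha : 0 ≤ a) (hab : a ≤ b) (hbc : b ≤ c)
    (hu : 0 ≤ u) (hv : 0 ≤ v) (hw : 0 ≤ w) (hua : u ≤ a) (hva : v ≤ a) (hwb : w ≤ b)
    (hsum : u + v + w ≤ a + b) :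
    c * u ^ 2 + b * v ^ 2 + a * w ^ 2 + u * v * w ≤ 3 * (a * b * c) := by
  have hb : 0 ≤ b := ha.trans hab
  have hc : 0 ≤ c := hb.trans hbc
  have hwc : 0 ≤ c - w := by linarith
  have hvc : 0 ≤ c - v := by linarith
  have hav : 0 ≤ a - v := sub_nonneg.2 hva
  nlinarith [mul_nonneg (mul_nonneg hu hv) hwc, mul_nonneg (mul_nonneg ha hw) hwc,
    mul_nonneg (mul_nonneg hc hu) (by linarith : 0 ≤ a + b - w - u - v),
    mul_nonneg (mul_nonneg hc (sub_nonneg.2 hua)) (by linarith : 0 ≤ a + b - w),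
    mul_nonneg (mul_nonneg ha hc) (sub_nonneg.2 hab),
    mul_nonneg (mul_nonneg hb hav) hvc, mul_nonneg (mul_nonneg hb hv) hav,
    mul_nonneg (mul_nonneg hb hv) hvc]

theorem minkowski_bound (a b c u v w : ℤ) (ha : 0 ≤ a) (hb : 0 ≤ b) (hc : 0 ≤ c)
    (hu : 0 ≤ u) (hv : 0 ≤ v) (hw : 0 ≤ w)
    (hua : u ≤ a) (hub : u ≤ b) (hva : v ≤ a) (hvc : v ≤ c) (hwb : w ≤ b) (hwc : w ≤ c)
    (hab : u + v + w ≤ a + b) (hac : u + v + w ≤ a + c) (hbc : u + v + w ≤ b + c) :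
    c * u ^ 2 + b * v ^ 2 + a * w ^ 2 + u * v * w ≤ 3 * (a * b * c) := by
  -- hypotheses and conclusion are invariant under permuting `(a, b, c)` along with `(w, v, u)`
  rcases le_total a b with h₁ | h₁ <;> rcases le_total b c with h₂ | h₂ <;>
    rcases le_total a c with h₃ | h₃
  all_goals first
    | linarith [minkowski_bound_of_le a b c u v w ha h₁ h₂ hu hv hw hua hva hwb (by linarith)]
    | linarith [minkowski_bound_of_le a c b v u w ha h₃ h₂ hv hu hw hva hua hwc (by linarith)]
    | linarith [minkowski_bound_of_le b a c u w v hb h₁ h₃ hu hw hv hub hwb hva (by linarith)]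
    | linarith [minkowski_bound_of_le b c a w u v hb h₂ h₃ hw hu hv hwb hub hvc (by linarith)]
    | linarith [minkowski_bound_of_le c a b v w u hc h₃ h₁ hv hw hu hvc hwc hua (by linarith)]
    | linarith [minkowski_bound_of_le c b a w v u hc h₂ h₁ hw hv hu hwc hvc hub (by linarith)]

theorem exists_sign_vector_eq (a b s t u : ℤ) (h : s * t * u < 0) :
    ∃ x y : ℤ, a * x ^ 2 + b * y ^ 2 + 2 * s * x + 2 * t * y + 2 * u * x * y
      = a + b - 2 * (|s| + |t| + |u|) := by
  have sign_sq {z : ℤ} (hz : z ≠ 0) : z.sign ^ 2 = 1 := by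
    rw [sq, ← Int.sign_mul, Int.sign_eq_one_of_pos (mul_self_pos.2 hz)]
  have hs : s ≠ 0 := by rintro rfl; simp at h
  have ht : t ≠ 0 := by rintro rfl; simp at h
  have hu : u ≠ 0 := by rintro rfl; simp at h
  have hsign : s.sign * t.sign * u.sign = -1 := by
    rw [← Int.sign_mul, ← Int.sign_mul, Int.sign_eq_neg_one_of_neg h]
  refine ⟨-s.sign, -t.sign, ?_⟩
  simp only [← Int.sign_mul_self_eq_abs]
  linear_combination a * sign_sq hs + b * sign_sq ht + 2 * u * u.sign * hsign
    - 2 * u * s.sign * t.sign * sign_sq hu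

theorem two_mul_abs_le {a p : ℤ} (hpos : 0 ≤ a + 2 * p) (hneg : 0 ≤ a - 2 * p) :
    2 * |p| ≤ a := by
  rw [← abs_two, ← abs_mul, abs_le]
  constructor <;> linarith

theorem four_mul_sq_le {a b p : ℤ} (ha : 2 * |p| ≤ a) (hb : 2 * |p| ≤ b) :
    4 * p ^ 2 ≤ a * b := by
  nlinarith [mul_le_mul ha hb (by positivity) (by linarith [abs_nonneg p]), sq_abs p]

theorem eq_one_of_binary_reduced {b c r : ℤ} (hb : 2 * |r| ≤ b) (hc : 2 * |r| ≤ c)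
    (hdet : b * c - r ^ 2 = 1) :
    b = 1 ∧ c = 1 ∧ r = 0 := by
  have hsq := four_mul_sq_le hb hc
  obtain rfl : r = 0 := Int.abs_lt_one_iff.1 (by nlinarith [sq_abs r])
  have hbc : b * c = 1 := by linarith
  exact ⟨Int.eq_one_of_mul_eq_one_right (by simpa using hb) hbc,
    Int.eq_one_of_mul_eq_one_left (by simpa using hc) hbc, rfl⟩

theorem mul_le_four_mul_det (a b c p q r : ℤ)
    (hpa : 2 * |p| ≤ a) (hqa : 2 * |q| ≤ a) (hpb : 2 * |p| ≤ b) (hrb : 2 * |r| ≤ b)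
    (hqc : 2 * |q| ≤ c) (hrc : 2 * |r| ≤ c)
    (h₀ : ∀ y z, 0 ≤ b * y ^ 2 + c * z ^ 2 + 2 * p * y + 2 * q * z + 2 * r * y * z)
    (h₁ : ∀ x z, 0 ≤ a * x ^ 2 + c * z ^ 2 + 2 * p * x + 2 * r * z + 2 * q * x * z)
    (h₂ : ∀ x y, 0 ≤ a * x ^ 2 + b * y ^ 2 + 2 * q * x + 2 * r * y + 2 * p * x * y) :
    a * b * c ≤ 4 * (a * b * c + 2 * p * q * r - a * r ^ 2 - b * q ^ 2 - c * p ^ 2) := by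
  have hp := abs_nonneg p
  have hq := abs_nonneg q
  have hr := abs_nonneg r
  -- `4 det - abc = 3abc - c (2p)² - b (2q)² - a (2r)² + 8pqr`
  rcases le_or_gt 0 (p * q * r) with hpqr | hpqr
  · nlinarith [mul_le_mul_of_nonneg_left (four_mul_sq_le hpa hpb) (by linarith : 0 ≤ c),
      mul_le_mul_of_nonneg_left (four_mul_sq_le hqa hqc) (by linarith : 0 ≤ b),
      mul_le_mul_of_nonneg_left (four_mul_sq_le hrb hrc) (by linarith : 0 ≤ a)]
  · obtain ⟨x, y, hab⟩ := exists_sign_vector_eq a b q r p (by linarith)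
    obtain ⟨x', z, hac⟩ := exists_sign_vector_eq a c p r q (by linarith)
    obtain ⟨y', z', hbc⟩ := exists_sign_vector_eq b c p q r hpqr
    have key := minkowski_bound a b c (2 * |p|) (2 * |q|) (2 * |r|) (by linarith) (by linarith)
      (by linarith) (by linarith) (by linarith) (by linarith) hpa hpb hqa hqc hrb hrc
      (by linarith [h₂ x y]) (by linarith [h₁ x' z]) (by linarith [h₀ y' z'])
    have habs : |p| * |q| * |r| = -(p * q * r) := by
      rw [← abs_mul, ← abs_mul, abs_of_neg hpqr]
    rw [mul_pow, mul_pow, mul_pow, sq_abs, sq_abs, sq_abs] at key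
    linarith

/-- `h₀`, `h₁`, `h₂` say that `a`, `b`, `c` are the minima of the form
`a x² + b y² + c z² + 2p xy + 2q xz + 2r yz` on the planes `x = 1`, `y = 1`, `z = 1`. -/
theorem eq_one_of_ternary_reduced (a b c p q r : ℤ)
    (h₀ : ∀ y z, 0 ≤ b * y ^ 2 + c * z ^ 2 + 2 * p * y + 2 * q * z + 2 * r * y * z)
    (h₁ : ∀ x z, 0 ≤ a * x ^ 2 + c * z ^ 2 + 2 * p * x + 2 * r * z + 2 * q * x * z)
    (h₂ : ∀ x y, 0 ≤ a * x ^ 2 + b * y ^ 2 + 2 * q * x + 2 * r * y + 2 * p * x * y)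
    (hdet : a * b * c + 2 * p * q * r - a * r ^ 2 - b * q ^ 2 - c * p ^ 2 = 1) :
    a = 1 ∧ b = 1 ∧ c = 1 ∧ p = 0 ∧ q = 0 ∧ r = 0 := by
  have hpa : 2 * |p| ≤ a := two_mul_abs_le (by linarith [h₁ 1 0]) (by linarith [h₁ (-1) 0])
  have hqa : 2 * |q| ≤ a := two_mul_abs_le (by linarith [h₂ 1 0]) (by linarith [h₂ (-1) 0])
  have hpb : 2 * |p| ≤ b := two_mul_abs_le (by linarith [h₀ 1 0]) (by linarith [h₀ (-1) 0])
  have hrb : 2 * |r| ≤ b := two_mul_abs_le (by linarith [h₂ 0 1]) (by linarith [h₂ 0 (-1)])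
  have hqc : 2 * |q| ≤ c := two_mul_abs_le (by linarith [h₀ 0 1]) (by linarith [h₀ 0 (-1)])
  have hrc : 2 * |r| ≤ c := two_mul_abs_le (by linarith [h₁ 0 1]) (by linarith [h₁ 0 (-1)])
  have hdiag : a * b * c ≤ 4 := by
    linarith [mul_le_four_mul_det a b c p q r hpa hqa hpb hrb hqc hrc h₀ h₁ h₂]
  have one_le {d s t : ℤ} (hs : 2 * |s| ≤ d) (ht : 2 * |t| ≤ d)
      (hzero : d = 0 → s = 0 → t = 0 → False) : 1 ≤ d := by
    by_contra! h
    have := abs_nonneg s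
    have := abs_nonneg t
    exact hzero (by omega) (abs_nonpos_iff.1 (by omega)) (abs_nonpos_iff.1 (by omega))
  have ha := one_le hpa hqa (by rintro rfl rfl rfl; simp at hdet)
  have hb := one_le hpb hrb (by rintro rfl rfl rfl; simp at hdet)
  have hc := one_le hqc hrc (by rintro rfl rfl rfl; simp at hdet)
  have eq_zero {s : ℤ} (hs : 2 * |s| ≤ 1) : s = 0 := abs_nonpos_iff.1 (by omega)
  have hone : a = 1 ∨ b = 1 ∨ c = 1 := by
    by_contra! h
    have : 2 * 2 * 2 ≤ a * b * c := by gcongr <;> omega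
    omega
  rcases hone with rfl | rfl | rfl
  · obtain rfl := eq_zero hpa
    obtain rfl := eq_zero hqa
    obtain ⟨rfl, rfl, rfl⟩ := eq_one_of_binary_reduced hrb hrc (by linarith)
    simp
  · obtain rfl := eq_zero hpb
    obtain rfl := eq_zero hrb
    obtain ⟨rfl, rfl, rfl⟩ := eq_one_of_binary_reduced hqa hqc (by linarith)
    simp
  · obtain rfl := eq_zero hqc
    obtain rfl := eq_zero hrc
    obtain ⟨rfl, rfl, rfl⟩ := eq_one_of_binary_reduced hpa hpb (by linarith)
    simp

namespace Matrix

theorem vec3_dotProduct_mulVec {B : Matrix (Fin 3) (Fin 3) ℤ} (hB : B.IsSymm) (x y z : ℤ) :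
    ![x, y, z] ⬝ᵥ B *ᵥ ![x, y, z] = B 0 0 * x ^ 2 + B 1 1 * y ^ 2 + B 2 2 * z ^ 2
      + 2 * B 0 1 * x * y + 2 * B 0 2 * x * z + 2 * B 1 2 * y * z := by
  simp only [dotProduct, mulVec, Fin.sum_univ_three, cons_val_zero, cons_val_one, cons_val,
    hB.apply 0 1, hB.apply 0 2, hB.apply 1 2]
  ring

theorem IsReduced.eq_one {B : Matrix (Fin 3) (Fin 3) ℤ} (hred : IsReduced B) (hB : B.IsSymm)
    (hdet : B.det = 1) : B = 1 := by
  have hQ := vec3_dotProduct_mulVec hB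
  obtain ⟨ha, hb, hc, hp, hq, hr⟩ :=
    eq_one_of_ternary_reduced (B 0 0) (B 1 1) (B 2 2) (B 0 1) (B 0 2) (B 1 2)
      (fun y z => by have := hred 0 ![1, y, z] rfl; rw [hQ] at this; linarith)
      (fun x z => by have := hred 1 ![x, 1, z] rfl; rw [hQ] at this; linarith)
      (fun x y => by have := hred 2 ![x, y, 1] rfl; rw [hQ] at this; linarith)
      (by rw [det_fin_three, hB.apply 0 1, hB.apply 0 2, hB.apply 1 2] at hdet
          linear_combination hdet)
  ext i j
  fin_cases i <;> fin_cases j <;>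
    simp [ha, hb, hc, hp, hq, hr, hB.apply 0 1, hB.apply 0 2, hB.apply 1 2]

end Matrix

theorem stmt14_general (A : Matrix (Fin 3) (Fin 3) ℤ)
    (hpos : (A.map (Int.cast : ℤ → ℝ)).PosDef) (hdet : A.det = 1) :
    ∃ T : Matrix (Fin 3) (Fin 3) ℤ, (T.det = 1 ∨ T.det = -1) ∧
      Tᵀ * A * T = 1 := by
  obtain ⟨T, hT, hred⟩ := exists_isReduced_transpose_mul_mul A hpos
  have hB := posDef_map_transpose_mul_mul hpos (T := T) (by simp [hT])
  exact ⟨T, Or.inl hT, hred.eq_one (isSymm_of_posDef_map hB) (by simp [det_mul, hT, hdet])⟩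

/-- Every positive definite symmetric 3×3 integer matrix with
determinant 1 is `GL₃(ℤ)`-equivalent to the identity matrix `I₃`. -/
theorem stmt14 (A : Matrix (Fin 3) (Fin 3) ℤ) (hsymm : Aᵀ = A)
    (hpos : (A.map (Int.cast : ℤ → ℝ)).PosDef) (hdet : A.det = 1) :
    ∃ T : Matrix (Fin 3) (Fin 3) ℤ, (T.det = 1 ∨ T.det = -1) ∧
      Tᵀ * A * T = 1 :=
  stmt14_general A hpos hdet
end
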